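/- arXiv:1809.11043 — 5 statements merged into one kernel-verified Lean document; each statement's English description precedes it below -/
import Mathlib

section
/- If A is a left semi-abelian category and f : X → Y is an irreducible morphism, then f is a proper monomorphism or a proper epimorphism (i.e., a monomorphism that is not an isomorphism, or an epimorphism that is not an isomorphism). -/
open CategoryTheory CategoryTheory.Limits

/-- A morphism is irreducible if it is neither a section nor a retraction,
and in every factorisation f = g ≫ h, either h is a retraction or g is a section. -/
def IrreducibleHom {C : Type*} [Category C] {X Y : C} (f : X ⟶ Y) : Prop :=
  ¬ IsSplitMono f ∧ ¬ IsSplitEpi f ∧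
    ∀ (Z : C) (g : X ⟶ Z) (h : Z ⟶ Y), g ≫ h = f → IsSplitEpi h ∨ IsSplitMono g

/-- A preabelian category is left semi-abelian if every morphism factors as a
monomorphism following a cokernel. -/
def IsLeftSemiAbelian (C : Type*) [Category C] [Preadditive C] [HasKernels C]
    [HasCokernels C] : Prop :=
  ∀ (A B : C) (f : A ⟶ B), ∃ (M : C) (p : A ⟶ M) (i : M ⟶ B),
    p ≫ i = f ∧ Mono i ∧
    ∃ (W : C) (w : W ⟶ A) (hw : w ≫ p = 0), Nonempty (IsColimit (CokernelCofork.ofπ p hw))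

/-- In a left semi-abelian category, an irreducible morphism is a proper
monomorphism or a proper epimorphism. -/
theorem stmt_7 {C : Type*} [Category C] [Preadditive C] [HasKernels C] [HasCokernels C]
    (hC : IsLeftSemiAbelian C) {X Y : C} (f : X ⟶ Y) (hf : IrreducibleHom f) :
    (Mono f ∧ ¬ IsIso f) ∨ (Epi f ∧ ¬ IsIso f) := by
  obtain ⟨hsm, hse, hfac⟩ := hf
  obtain ⟨M, p, i, hpi, hi, W, w, hw, ⟨hcolim⟩⟩ := hC X Y f
  have hp : Epi p := epi_of_isColimit_cofork hcolim
  rcases hfac M p i hpi with h | h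
  · -- i split epi and mono ⇒ i iso; f epi
    haveI : IsSplitEpi i := h
    haveI : IsIso i := isIso_of_mono_of_isSplitEpi i
    right
    refine ⟨?_, ?_⟩
    · rw [← hpi]; exact epi_comp p i
    · intro h'
      exact hsm (IsSplitMono.mk ⟨⟨inv f, IsIso.hom_inv_id f⟩⟩)
  · -- p split mono and epi ⇒ p iso; f mono
    haveI : IsSplitMono p := h
    haveI : IsIso p := isIso_of_epi_of_isSplitMono p
    left
    refine ⟨?_, ?_⟩
    · rw [← hpi]; exact mono_comp p i
    · intro h'
      exact hse (IsSplitEpi.mk ⟨⟨inv f, IsIso.inv_hom_id f⟩⟩)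
end

section
/- Let A be a preadditive k-category over a commutative ring k, and let f : X → Y be a morphism with End(X) a local ring. Then the following are equivalent: (i) f is not a section; (ii) f lies in the radical rad_A(X,Y); (iii) for every g : Y → X, the composite g ∘ f lies in the Jacobson radical of End(X); (iv) for all objects Z and all g : Y → Z, the composite g ∘ f lies in rad_A(X,Z). -/
open CategoryTheory CategoryTheory.Limits

/-- A morphism `f : X ⟶ Y` lies in the radical of the category if `1_X - g ∘ f`
is invertible for every `g : Y ⟶ X`. -/
def InCatRadical {C : Type*} [Category C] [Preadditive C] {X Y : C} (f : X ⟶ Y) : Prop :=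
  ∀ g : Y ⟶ X, IsIso (𝟙 X - f ≫ g)

/-- In a (possibly noncommutative) local ring, `a` or `1 - a` is a unit. -/
private lemma aux_isUnit_or {R : Type*} [Ring R] [IsLocalRing R] (a : R) :
    IsUnit a ∨ IsUnit (1 - a) :=
  IsLocalRing.isUnit_or_isUnit_of_add_one (add_sub_cancel a 1)

/-- In a (possibly noncommutative) local ring, a right inverse is a unit. -/
private lemma aux_isUnit_of_mul_eq_one {R : Type*} [Ring R] [IsLocalRing R] {a b : R}
    (h : a * b = 1) : IsUnit b := by
  rcases aux_isUnit_or (b * a) with he | he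
  · obtain ⟨u, hu⟩ := he.exists_left_inv
    have h1 : u * b * a = 1 := by rw [mul_assoc]; exact hu
    have h2 : u * b = b := by
      calc u * b = u * b * (a * b) := by rw [h, mul_one]
      _ = u * b * a * b := by rw [mul_assoc (u*b)]
      _ = b := by rw [h1, one_mul]
    rw [h2] at h1
    exact ⟨⟨b, a, h1, h⟩, rfl⟩
  · obtain ⟨u, hu⟩ := he.exists_left_inv
    have hz : (1 - b * a) * b = 0 := by
      rw [sub_mul, one_mul, mul_assoc, h, mul_one, sub_self]
    have hb0 : b = 0 := by
      calc b = u * ((1 - b * a) * b) := by rw [← mul_assoc, hu, one_mul]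
      _ = 0 := by rw [hz, mul_zero]
    rw [hb0, mul_zero] at h
    exact absurd h.symm one_ne_zero

/-- For a morphism `f : X ⟶ Y` in a `k`-category with `End X` local, the following
are equivalent: (i) `f` is not a section; (ii) `f` is radical; (iii) `g ∘ f` lies in
the Jacobson radical of `End X` for every `g : Y ⟶ X`; (iv) `g ∘ f` is radical
for every `g : Y ⟶ Z`. -/
theorem stmt_8 {k : Type*} [CommRing k] {C : Type*} [Category C] [Preadditive C]
    [Linear k C] {X Y : C} (f : X ⟶ Y) (hX : IsLocalRing (End X)) :
    List.TFAE
      [¬ IsSplitMono f,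
       InCatRadical f,
       ∀ g : Y ⟶ X, (f ≫ g : End X) ∈ Ideal.jacobson (⊥ : Ideal (End X)),
       ∀ (Z : C) (g : Y ⟶ Z), InCatRadical (f ≫ g)] := by
  haveI := hX
  tfae_have 1 → 3 := by
    intro h1 g
    set x : End X := f ≫ g with hx
    -- `f ≫ g` is not a unit of `End X`, else `f` would be a split mono.
    have hnu : ¬ IsUnit x := by
      intro hu
      rw [isUnit_iff_isIso] at hu
      rw [hx] at hu
      exact h1 ⟨⟨g ≫ inv (f ≫ g), by
        rw [← Category.assoc]
        exact IsIso.hom_inv_id _⟩⟩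
    refine (Ideal.mem_jacobson_iff (R := End X)).mpr ?_
    show ∀ y : End X, ∃ z : End X, z * y * x + z - 1 ∈ (⊥ : Ideal (End X))
    intro y
    rcases aux_isUnit_or (R := End X) (-(y * x)) with hu | hu
    · exfalso
      have hu' : IsUnit (y * x) := by
        have := hu.neg
        rwa [neg_neg] at this
      obtain ⟨z, hz⟩ := hu'.exists_left_inv
      rw [← mul_assoc] at hz
      exact hnu (aux_isUnit_of_mul_eq_one hz)
    · rw [sub_neg_eq_add] at hu
      obtain ⟨z, hz⟩ := hu.exists_left_inv
      refine ⟨z, ?_⟩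
      rw [Ideal.mem_bot, sub_eq_zero, mul_assoc]
      calc z * (y * x) + z = z * (1 + y * x) := by rw [mul_add, mul_one, add_comm]
        _ = 1 := hz
  tfae_have 3 → 2 := by
    intro h3 g
    have hx := h3 g
    rcases aux_isUnit_or (R := End X) (f ≫ g) with hu | hu
    · exfalso
      have : (⊥ : Ideal (End X)).jacobson = ⊤ := Ideal.eq_top_of_isUnit_mem _ hx hu
      rw [Ideal.jacobson_eq_top_iff] at this
      have h1 : (1 : End X) ∈ (⊥ : Ideal (End X)) := this ▸ Submodule.mem_top
      rw [Ideal.mem_bot] at h1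
      exact one_ne_zero h1
    · rw [isUnit_iff_isIso] at hu
      exact hu
  tfae_have 2 → 4 := by
    intro h2 Z g h
    have := h2 (g ≫ h)
    rwa [← Category.assoc] at this
  tfae_have 4 → 1 := by
    intro h4 hs
    have := h4 X (retraction f) (𝟙 X)
    rw [IsSplitMono.id, Category.id_comp] at this
    have h0 : IsIso (0 : X ⟶ X) := by simpa using this
    have : (𝟙 X : X ⟶ X) = 0 := by
      rw [← IsIso.hom_inv_id (0 : X ⟶ X), zero_comp]
    exact one_ne_zero (α := End X) this
  tfae_finish
end

section
/- Let A be an additive category with split idempotents. If f : X → Y is a minimal left almost split morphism and Y ≠ 0, then f is irreducible. -/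
open CategoryTheory CategoryTheory.Limits

/-- `f : X ⟶ Y` is left almost split if it is not a section and every
non-section `u : X ⟶ U` factors through `f`. -/
def LeftAlmostSplit {C : Type*} [Category C] {X Y : C} (f : X ⟶ Y) : Prop :=
  ¬ IsSplitMono f ∧ ∀ (U : C) (u : X ⟶ U), ¬ IsSplitMono u → ∃ v : Y ⟶ U, f ≫ v = u

/-- `f` is left minimal if any `g` with `f ≫ g = f` is an automorphism. -/
def LeftMinimal {C : Type*} [Category C] {X Y : C} (f : X ⟶ Y) : Prop :=
  ∀ g : Y ⟶ Y, f ≫ g = f → IsIso g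

/-- A minimal left almost split morphism with nonzero target is irreducible. -/
theorem stmt_10 {C : Type*} [Category C] [Preadditive C] [HasBinaryBiproducts C]
    [IsIdempotentComplete C] {X Y : C} (f : X ⟶ Y)
    (h1 : LeftAlmostSplit f) (h2 : LeftMinimal f) (hY : ¬ IsZero Y) :
    IrreducibleHom f := by
  obtain ⟨hns, hfac⟩ := h1
  refine ⟨hns, ?_, ?_⟩
  · -- not split epi
    rintro ⟨⟨s, hs⟩⟩
    by_cases hu : IsSplitMono (𝟙 X - f ≫ s)
    · -- then f ≫ s = 0, so f = 0, so Y is zero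
      have hr : (𝟙 X - f ≫ s) ≫ retraction (𝟙 X - f ≫ s) = 𝟙 X :=
        IsSplitMono.id _
      have he : (f ≫ s) ≫ (𝟙 X - f ≫ s) = 0 := by
        simp only [Preadditive.comp_sub, Category.comp_id, Category.assoc]
        rw [reassoc_of% hs]
        simp
      have hfs : f ≫ s = 0 := by
        calc f ≫ s = (f ≫ s) ≫ (𝟙 X - f ≫ s) ≫ retraction (𝟙 X - f ≫ s) := by
              rw [hr, Category.comp_id]
          _ = 0 := by rw [← Category.assoc, he, zero_comp]
      have hf0 : f = 0 := by
        have : f ≫ s ≫ f = f := by rw [hs, Category.comp_id]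
        rw [← this, ← Category.assoc, hfs, zero_comp]
      apply hY
      rw [IsZero.iff_id_eq_zero, ← hs, hf0, comp_zero]
    · obtain ⟨v, hv⟩ := hfac _ _ hu
      exact hns ⟨⟨v + s, by rw [Preadditive.comp_add, hv]; abel⟩⟩
  · intro Z g h hgh
    by_cases hg : IsSplitMono g
    · exact Or.inr hg
    · obtain ⟨v, hv⟩ := hfac _ _ hg
      have : f ≫ (v ≫ h) = f := by rw [← Category.assoc, hv, hgh]
      have := h2 _ this
      exact Or.inl ⟨⟨inv (v ≫ h) ≫ v, by simp⟩⟩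
end

section
/- Let A be a preadditive category, I an ideal of A, and X, Y objects with End(X), End(Y) local rings and 1_X ∉ I(X,X), 1_Y ∉ I(Y,Y). Then a morphism f : X → Y is a section in A if and only if its image f + I(X,Y) is a section in the quotient category A/I; similarly f is a retraction in A iff its image is a retraction in A/I, and f is an isomorphism in A iff its image is an isomorphism in A/I. -/
/-! Lift a one-sided inverse `r` of the image of `f` to `A`: then `f ≫ r - 𝟙` lies in the ideal.
In the local ring `End X` one of `f ≫ r` and `𝟙 - f ≫ r` is a unit, and the second cannot be
since `𝟙 X ∉ I`; so `f ≫ r` is invertible and `r ≫ (f ≫ r)⁻¹` is a genuine retraction of `f`.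
Retractions are dual, and a morphism that is both a section and a retraction is an isomorphism. -/

open CategoryTheory CategoryTheory.Limits

/-- A two-sided ideal of a preadditive category: a family of subgroups of the
Hom-groups closed under composition on both sides. -/
structure CatIdeal (C : Type*) [Category C] [Preadditive C] where
  I : ∀ X Y : C, AddSubgroup (X ⟶ Y)
  comp_right : ∀ {X Y Z : C} (f : X ⟶ Y), f ∈ I X Y → ∀ g : Y ⟶ Z, f ≫ g ∈ I X Z
  comp_left : ∀ {X Y Z : C} (f : Y ⟶ Z), f ∈ I Y Z → ∀ g : X ⟶ Y, g ≫ f ∈ I X Z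

/-- The hom-relation identifying two morphisms when their difference lies in the
ideal; the quotient category `A/I` is the category-theoretic quotient by it. -/
def CatIdeal.rel {C : Type*} [Category C] [Preadditive C] (I : CatIdeal C) : HomRel C :=
  fun {X Y} f g => f - g ∈ I.I X Y

lemma isSplitMono_of_isIso_comp {C : Type*} [Category C] {X Y : C} (f : X ⟶ Y) (r : Y ⟶ X)
    [IsIso (f ≫ r)] : IsSplitMono f :=
  IsSplitMono.mk' ⟨r ≫ inv (f ≫ r), by rw [← Category.assoc, IsIso.hom_inv_id]⟩

lemma isSplitEpi_of_isIso_comp {C : Type*} [Category C] {X Y : C} (f : X ⟶ Y) (s : Y ⟶ X)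
    [IsIso (s ≫ f)] : IsSplitEpi f :=
  IsSplitEpi.mk' ⟨inv (s ≫ f) ≫ s, by rw [Category.assoc, IsIso.inv_hom_id]⟩

namespace CatIdeal

variable {C : Type*} [Category C] [Preadditive C] (I : CatIdeal C)

instance congruence : Congruence I.rel where
  equivalence :=
    { refl := fun f => by simpa only [rel, sub_self] using (I.I _ _).zero_mem
      symm := fun {f g} h => by simpa only [rel, neg_sub] using (I.I _ _).neg_mem h
      trans := fun {f g h} hfg hgh => by
        simpa only [rel, sub_add_sub_cancel] using (I.I _ _).add_mem hfg hgh }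
  comp_left f g g' h := by
    simpa only [rel, Preadditive.comp_sub] using I.comp_left _ h f
  comp_right g h := by
    simpa only [rel, Preadditive.sub_comp] using I.comp_right _ h g

lemma id_mem_of_isIso_mem {X Y : C} {g : X ⟶ Y} (hg : g ∈ I.I X Y) [IsIso g] :
    𝟙 X ∈ I.I X X := by
  simpa only [IsIso.hom_inv_id] using I.comp_right g hg (inv g)

lemma isIso_of_map_eq_id {Z : C} (hl : IsLocalRing (End Z)) (hZ : 𝟙 Z ∉ I.I Z Z) (e : Z ⟶ Z)
    (he : (Quotient.functor I.rel).map e = 𝟙 _) : IsIso e := by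
  have hmem : 𝟙 Z - e ∈ I.I Z Z := by
    rw [← (Quotient.functor I.rel).map_id, Quotient.functor_map_eq_iff] at he
    simpa only [neg_sub] using (I.I Z Z).neg_mem he
  rcases hl.isUnit_or_isUnit_of_add_one (add_sub_cancel e (1 : End Z)) with h | h
  · exact (isUnit_iff_isIso e).mp h
  · have := (isUnit_iff_isIso _).mp h
    exact absurd (I.id_mem_of_isIso_mem hmem) hZ

lemma isSplitMono_of_isSplitMono_map {X Y : C} (hl : IsLocalRing (End X)) (hX : 𝟙 X ∉ I.I X X)
    (f : X ⟶ Y) [IsSplitMono ((Quotient.functor I.rel).map f)] : IsSplitMono f := by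
  obtain ⟨r, hr⟩ := (Quotient.functor I.rel).map_surjective
    (retraction ((Quotient.functor I.rel).map f))
  have := I.isIso_of_map_eq_id hl hX (f ≫ r) (by simp [hr])
  exact isSplitMono_of_isIso_comp f r

lemma isSplitEpi_of_isSplitEpi_map {X Y : C} (hl : IsLocalRing (End Y)) (hY : 𝟙 Y ∉ I.I Y Y)
    (f : X ⟶ Y) [IsSplitEpi ((Quotient.functor I.rel).map f)] : IsSplitEpi f := by
  obtain ⟨s, hs⟩ := (Quotient.functor I.rel).map_surjective
    (section_ ((Quotient.functor I.rel).map f))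
  have := I.isIso_of_map_eq_id hl hY (s ≫ f) (by simp [hs])
  exact isSplitEpi_of_isIso_comp f s

end CatIdeal

/-- With `End X`, `End Y` local and the identities not in the ideal, a morphism
is a section (resp. retraction, isomorphism) in `A` iff its image in `A/I` is. -/
theorem stmt_15 {C : Type*} [Category C] [Preadditive C] (I : CatIdeal C)
    {X Y : C} (hlX : IsLocalRing (End X)) (hlY : IsLocalRing (End Y))
    (hX : 𝟙 X ∉ I.I X X) (hY : 𝟙 Y ∉ I.I Y Y) (f : X ⟶ Y) :
    (IsSplitMono f ↔ IsSplitMono ((Quotient.functor I.rel).map f)) ∧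
    (IsSplitEpi f ↔ IsSplitEpi ((Quotient.functor I.rel).map f)) ∧
    (IsIso f ↔ IsIso ((Quotient.functor I.rel).map f)) := by
  have reflect_mono := fun (_ : IsSplitMono ((Quotient.functor I.rel).map f)) =>
    I.isSplitMono_of_isSplitMono_map hlX hX f
  have reflect_epi := fun (_ : IsSplitEpi ((Quotient.functor I.rel).map f)) =>
    I.isSplitEpi_of_isSplitEpi_map hlY hY f
  refine ⟨⟨fun _ => inferInstance, reflect_mono⟩, ⟨fun _ => inferInstance, reflect_epi⟩,
    ⟨fun _ => inferInstance, fun _ => ?_⟩⟩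
  have := reflect_mono inferInstance
  have := reflect_epi inferInstance
  exact isIso_of_mono_of_isSplitEpi f
end

section
/- Suppose in an additive category with split idempotents we have a commutative square v ∘ f = g ∘ u with f : Y → Z and g : Y → Z both nonzero minimal right almost split morphisms, u : Y → Y, v : Z → Z. Then u is an automorphism of Y if and only if v is an automorphism of Z. -/
open CategoryTheory CategoryTheory.Limits

/-- `f : X ⟶ Y` is right almost split if it is not a retraction and every
non-retraction `u : U ⟶ Y` factors through `f`. -/
def RightAlmostSplit {C : Type*} [Category C] {X Y : C} (f : X ⟶ Y) : Prop :=
  ¬ IsSplitEpi f ∧ ∀ (U : C) (u : U ⟶ Y), ¬ IsSplitEpi u → ∃ v : U ⟶ X, v ≫ f = u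

/-- `f` is right minimal if any `g` with `g ≫ f = f` is an automorphism. -/
def RightMinimal {C : Type*} [Category C] {X Y : C} (f : X ⟶ Y) : Prop :=
  ∀ g : X ⟶ X, g ≫ f = f → IsIso g

section Aux

variable {C : Type*} [Category C] [Preadditive C]

/-- If `i ≫ p = 𝟙` and `i` is a split epi, then `p ≫ i = 𝟙`. -/
lemma aux_retr_iso {W Z : C} (i : W ⟶ Z) (p : Z ⟶ W) (hip : i ≫ p = 𝟙 W)
    (hse : IsSplitEpi i) : p ≫ i = 𝟙 Z := by
  obtain ⟨⟨s, hs⟩⟩ := hse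
  have hsp : s = p := by
    calc s = s ≫ (i ≫ p) := by rw [hip, Category.comp_id]
    _ = (s ≫ i) ≫ p := by rw [Category.assoc]
    _ = p := by rw [hs, Category.id_comp]
  rw [← hsp, hs]

/-- A right almost split morphism `f ≠ 0` cannot be a split mono. -/
lemma aux_not_splitMono [IsIdempotentComplete C] {Y Z : C} (f : Y ⟶ Z)
    (hf0 : f ≠ 0) (hras : RightAlmostSplit f) (r : Z ⟶ Y) (hr : f ≫ r = 𝟙 Y) :
    False := by
  set e : Z ⟶ Z := r ≫ f with he
  have hfe : f ≫ e = f := by rw [he, ← Category.assoc, hr, Category.id_comp]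
  have hq : (𝟙 Z - e) ≫ (𝟙 Z - e) = 𝟙 Z - e := by
    have hee : e ≫ e = e := by
      rw [he, Category.assoc, ← Category.assoc f r, hr, Category.id_comp]
    simp [Preadditive.sub_comp, Preadditive.comp_sub, hee]
  obtain ⟨W, i, p, hip, hpi⟩ := IsIdempotentComplete.idempotents_split Z (𝟙 Z - e) hq
  by_cases hse : IsSplitEpi i
  · have := aux_retr_iso i p hip hse
    have he0 : e = 0 := by
      have : (𝟙 Z : Z ⟶ Z) - e = 𝟙 Z := by rw [← hpi, this]
      linear_combination (norm := abel) -this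
    have : f = 0 := by rw [← hfe, he0, Limits.comp_zero]
    exact hf0 this
  · obtain ⟨t, ht⟩ := hras.2 W i hse
    apply hras.1
    refine ⟨⟨r + p ≫ t, ?_⟩⟩
    have : (p ≫ t) ≫ f = 𝟙 Z - e := by rw [Category.assoc, ht, hpi]
    rw [Preadditive.add_comp, this, he]
    abel

/-- A split epi endomorphism of the target of a nonzero right almost split
morphism is an isomorphism. -/
lemma aux_splitEpi_iso [IsIdempotentComplete C] {Y Z : C} (f : Y ⟶ Z)
    (hf0 : f ≠ 0) (hras : RightAlmostSplit f) (φ : Z ⟶ Z) (hse : IsSplitEpi φ) :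
    IsIso φ := by
  obtain ⟨⟨s, hs⟩⟩ := hse
  set e : Z ⟶ Z := φ ≫ s with he
  have hee : e ≫ e = e := by
    rw [he, Category.assoc, ← Category.assoc s, hs, Category.id_comp]
  have heφ : e ≫ φ = φ := by rw [he, Category.assoc, hs, Category.comp_id]
  obtain ⟨W, i, p, hip, hpi⟩ := IsIdempotentComplete.idempotents_split Z e hee
  by_cases hi : IsSplitEpi i
  · -- then e = 𝟙, so φ is iso with inverse s
    have hpi1 := aux_retr_iso i p hip hi
    have he1 : e = 𝟙 Z := by rw [← hpi, hpi1]
    refine ⟨⟨s, ?_, hs⟩⟩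
    rw [← he, he1]
  · have hq : (𝟙 Z - e) ≫ (𝟙 Z - e) = 𝟙 Z - e := by
      simp [Preadditive.sub_comp, Preadditive.comp_sub, hee]
    obtain ⟨W', i', p', hip', hpi'⟩ := IsIdempotentComplete.idempotents_split Z (𝟙 Z - e) hq
    by_cases hi' : IsSplitEpi i'
    · have hpi1 := aux_retr_iso i' p' hip' hi'
      have he0 : e = 0 := by
        have h1 : (𝟙 Z : Z ⟶ Z) - e = 𝟙 Z := by rw [← hpi', hpi1]
        linear_combination (norm := abel) -h1
      exfalso
      have hφ0 : φ = 0 := by rw [← heφ, he0, Limits.zero_comp]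
      have : (𝟙 Z : Z ⟶ Z) = 0 := by rw [← hs, hφ0, Limits.comp_zero]
      exact hf0 (by rw [← Category.comp_id f, this, Limits.comp_zero])
    · obtain ⟨t, ht⟩ := hras.2 W i hi
      obtain ⟨t', ht'⟩ := hras.2 W' i' hi'
      exfalso
      apply hras.1
      refine ⟨⟨p ≫ t + p' ≫ t', ?_⟩⟩
      have h1 : (p ≫ t) ≫ f = e := by rw [Category.assoc, ht, hpi]
      have h2 : (p' ≫ t') ≫ f = 𝟙 Z - e := by rw [Category.assoc, ht', hpi']
      rw [Preadditive.add_comp, h1, h2]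
      abel

/-- Direction 1: in a square `f ≫ v = w ≫ f` with `w` iso, `v` is iso. -/
lemma aux_dir1 [IsIdempotentComplete C] {Y Z : C} (f : Y ⟶ Z) (hf0 : f ≠ 0)
    (hras : RightAlmostSplit f) (hmin : RightMinimal f) (v : Z ⟶ Z) (w : Y ⟶ Y)
    (hw : IsIso w) (hsq : f ≫ v = w ≫ f) : IsIso v := by
  by_cases hv : IsSplitEpi v
  · exact aux_splitEpi_iso f hf0 hras v hv
  · exfalso
    obtain ⟨t, ht⟩ := hras.2 Z v hv
    have key : (inv w ≫ f ≫ t) ≫ f = f := by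
      rw [Category.assoc, Category.assoc, ht, hsq, ← Category.assoc,
        IsIso.inv_hom_id, Category.id_comp]
    have h1 : IsIso (inv w ≫ f ≫ t) := hmin _ key
    have h2 : IsIso (f ≫ t) := by
      have : f ≫ t = w ≫ (inv w ≫ f ≫ t) := by
        rw [← Category.assoc, IsIso.hom_inv_id, Category.id_comp]
      rw [this]; infer_instance
    exact aux_not_splitMono f hf0 hras (t ≫ inv (f ≫ t))
      (by rw [← Category.assoc, IsIso.hom_inv_id])

/-- Direction 2: in a square `f ≫ v = w ≫ f` with `v` iso, `w` is iso. -/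
lemma aux_dir2 {Y Z : C} (f : Y ⟶ Z) (hras : RightAlmostSplit f)
    (hmin : RightMinimal f) (v : Z ⟶ Z) (w : Y ⟶ Y) (hv : IsIso v)
    (hsq : f ≫ v = w ≫ f) : IsIso w := by
  have hnse : ¬ IsSplitEpi (f ≫ inv v) := by
    intro ⟨⟨s, hs⟩⟩
    apply hras.1
    refine ⟨⟨inv v ≫ s, ?_⟩⟩
    have hsf : s ≫ f = v := by
      have := hs
      rw [← Category.assoc] at this
      calc s ≫ f = ((s ≫ f) ≫ inv v) ≫ v := by
            rw [Category.assoc, IsIso.inv_hom_id, Category.comp_id]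
      _ = v := by rw [this, Category.id_comp]
    rw [Category.assoc, hsf, IsIso.inv_hom_id]
  obtain ⟨w', hw'⟩ := hras.2 Y (f ≫ inv v) hnse
  have h1 : (w' ≫ w) ≫ f = f := by
    rw [Category.assoc, ← hsq, ← Category.assoc, hw', Category.assoc,
      IsIso.inv_hom_id, Category.comp_id]
  have h2 : (w ≫ w') ≫ f = f := by
    rw [Category.assoc, hw', ← Category.assoc, ← hsq, Category.assoc,
      IsIso.hom_inv_id, Category.comp_id]
  have hww' : IsIso (w ≫ w') := hmin _ h2
  have hw'w : IsIso (w' ≫ w) := hmin _ h1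
  -- `w` has a left inverse and a right inverse, hence is iso
  have hl : (inv (w' ≫ w) ≫ w') ≫ w = 𝟙 Y := by
    rw [Category.assoc, IsIso.inv_hom_id]
  have hr : w ≫ (w' ≫ inv (w ≫ w')) = 𝟙 Y := by
    rw [← Category.assoc, IsIso.hom_inv_id]
  have heq : inv (w' ≫ w) ≫ w' = w' ≫ inv (w ≫ w') := by
    calc inv (w' ≫ w) ≫ w'
        = (inv (w' ≫ w) ≫ w') ≫ (w ≫ (w' ≫ inv (w ≫ w'))) := by
          rw [hr, Category.comp_id]
      _ = ((inv (w' ≫ w) ≫ w') ≫ w) ≫ (w' ≫ inv (w ≫ w')) := by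
          simp only [Category.assoc]
      _ = w' ≫ inv (w ≫ w') := by rw [hl, Category.id_comp]
  exact ⟨⟨w' ≫ inv (w ≫ w'), hr, by rw [← heq]; exact hl⟩⟩

/-- Two nonzero minimal right almost split morphisms with the same target are
connected by an isomorphism. -/
lemma aux_compare {Y Z : C} (f g : Y ⟶ Z)
    (hf : RightAlmostSplit f ∧ RightMinimal f)
    (hg : RightAlmostSplit g ∧ RightMinimal g) :
    ∃ a : Y ⟶ Y, IsIso a ∧ a ≫ f = g := by
  obtain ⟨a, ha⟩ := hf.1.2 Y g hg.1.1
  obtain ⟨b, hb⟩ := hg.1.2 Y f hf.1.1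
  have h1 : (b ≫ a) ≫ f = f := by rw [Category.assoc, ha, hb]
  have h2 : (a ≫ b) ≫ g = g := by rw [Category.assoc, hb, ha]
  have hba : IsIso (b ≫ a) := hf.2 _ h1
  have hab : IsIso (a ≫ b) := hg.2 _ h2
  refine ⟨a, ?_, ha⟩
  have hl : (inv (b ≫ a) ≫ b) ≫ a = 𝟙 Y := by
    rw [Category.assoc, IsIso.inv_hom_id]
  have hr : a ≫ (b ≫ inv (a ≫ b)) = 𝟙 Y := by
    rw [← Category.assoc, IsIso.hom_inv_id]
  have heq : inv (b ≫ a) ≫ b = b ≫ inv (a ≫ b) := by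
    calc inv (b ≫ a) ≫ b
        = (inv (b ≫ a) ≫ b) ≫ (a ≫ (b ≫ inv (a ≫ b))) := by
          rw [hr, Category.comp_id]
      _ = ((inv (b ≫ a) ≫ b) ≫ a) ≫ (b ≫ inv (a ≫ b)) := by
          simp only [Category.assoc]
      _ = b ≫ inv (a ≫ b) := by rw [hl, Category.id_comp]
  exact ⟨⟨b ≫ inv (a ≫ b), hr, by rw [← heq]; exact hl⟩⟩

end Aux

/-- Given a commutative square `v ∘ f = g ∘ u` with `f g : Y ⟶ Z` nonzero minimal
right almost split, `u` is an automorphism iff `v` is. -/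
theorem stmt_17 {C : Type*} [Category C] [Preadditive C] [HasBinaryBiproducts C]
    [IsIdempotentComplete C] {Y Z : C} (f g : Y ⟶ Z) (u : Y ⟶ Y) (v : Z ⟶ Z)
    (hf0 : f ≠ 0) (hg0 : g ≠ 0)
    (hf : RightAlmostSplit f ∧ RightMinimal f)
    (hg : RightAlmostSplit g ∧ RightMinimal g)
    (hsq : f ≫ v = u ≫ g) :
    IsIso u ↔ IsIso v := by
  obtain ⟨a, ha, haf⟩ := aux_compare f g hf hg
  have hsq' : f ≫ v = (u ≫ a) ≫ f := by
    rw [hsq, ← haf, Category.assoc]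
  constructor
  · intro hu
    have : IsIso (u ≫ a) := by infer_instance
    exact aux_dir1 f hf0 hf.1 hf.2 v (u ≫ a) this hsq'
  · intro hv
    have hua : IsIso (u ≫ a) := aux_dir2 f hf.1 hf.2 v (u ≫ a) hv hsq'
    have : u = (u ≫ a) ≫ inv a := by
      rw [Category.assoc, IsIso.hom_inv_id, Category.comp_id]
    rw [this]
    infer_instance
end
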